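/- There is an adjoint quadruple between FintypeCat and the category Poly of polynomial functors: the functor n ↦ n·𝓎 (sending a finite set n to the n-fold coproduct of the identity-representable Fin(1, –)) is left adjoint to evaluation at 1 (P ↦ P(1)), which is left adjoint to the constant-polynomial functor (n ↦ the constant functor with value n), which is left adjoint to evaluation at 0 (P ↦ P(0)). -/

import Mathlib

/- STATEMENT 10: There is an adjoint quadruple between `FintypeCat` and the category `PolyCat` of
polynomial functors: `n ↦ n·𝓎` (the `n`-fold coproduct of `Fin(1, –)`) is left adjoint to
evaluation at `1` (`P ↦ P(1)`), which is left adjoint to the constant-polynomial functor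
(`n ↦` the `n`-fold coproduct of the terminal functor `Fin(0, –)`), which is left adjoint to
evaluation at `0` (`P ↦ P(0)`). -/

open CategoryTheory CategoryTheory.Limits Opposite

noncomputable section

attribute [local instance] FintypeCat.fintype

noncomputable instance (X Y : FintypeCat.{0}) : Fintype (X ⟶ Y) := by
  classical exact (Fintype.ofInjective (fun f : X ⟶ Y => (fun x : X => f x))
    (fun f g h => FintypeCat.hom_ext f g (congrFun h)))

/-- The finite coproduct `∐ᵢ Fin(kᵢ, –)` of corepresentable functors `FintypeCat ⥤ FintypeCat`. -/
def polySum {I : Type} [Fintype I] (k : I → FintypeCat.{0}) :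
    FintypeCat.{0} ⥤ FintypeCat.{0} where
  obj X := FintypeCat.of (Σ i, (k i ⟶ X))
  map f := FintypeCat.homMk (fun x => ⟨x.1, x.2 ≫ f⟩)
  map_id X := FintypeCat.hom_ext _ _ (fun x => by
    change (⟨x.1, x.2 ≫ 𝟙 X⟩ : Σ i, (k i ⟶ X)) = x; simp)
  map_comp f g := FintypeCat.hom_ext _ _ (fun x => by
    change (⟨x.1, x.2 ≫ (f ≫ g)⟩ : Σ i, (k i ⟶ _)) = ⟨x.1, (x.2 ≫ f) ≫ g⟩; simp)

/-- A polynomial functor is a finite coproduct of corepresentables. -/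
def IsPolynomial (P : FintypeCat.{0} ⥤ FintypeCat.{0}) : Prop :=
  ∃ (I : Type) (_ : Fintype I) (k : I → FintypeCat.{0}), Nonempty (P ≅ polySum k)

/-- The category of polynomial functors. -/
abbrev PolyCat := ObjectProperty.FullSubcategory IsPolynomial

/-- The empty finite set `0`. -/
abbrev X0 : FintypeCat.{0} := FintypeCat.of PEmpty

/-- A one-element finite set `1`. -/
abbrev X1 : FintypeCat.{0} := FintypeCat.of PUnit

/-!
A natural transformation out of `n·𝓎^k` is determined by the images of the `n` copies of `𝟙 k`
(Yoneda), so `n·𝓎^k ⊣ eval_k`; for `k = 0` the left adjoint is the constant polynomial, because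
`0 ⟶ X` is a singleton. Since `1` is terminal, a map `P(1) ⟶ n` extends uniquely to a natural
transformation `P ⟶ n` through the maps `P(X) ⟶ P(1)`, so `eval_1 ⊣ const`. The adjunctions live
on the whole functor category and restrict to the full subcategory of polynomial functors.
-/

section EvaluationConst

variable {J C : Type*} [Category J] [Category C]

def evaluationAdjConstOfIsTerminal {t : J} (ht : IsTerminal t) :
    (evaluation J C).obj t ⊣ Functor.const J :=
  Adjunction.mkOfHomEquiv
  { homEquiv := fun F c =>
      { toFun := fun f =>
          { app := fun j => F.map (ht.from j) ≫ f
            naturality := fun i j g => by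
              simp [← F.map_comp_assoc, ht.hom_ext (g ≫ ht.from j) (ht.from i)] }
        invFun := fun α => α.app t
        left_inv := fun f => by simp
        right_inv := fun α => by
          ext j
          simp }
    homEquiv_naturality_left_symm := by cat_disch
    homEquiv_naturality_right := by cat_disch }

end EvaluationConst

instance (X : FintypeCat.{0}) : Unique (X0 ⟶ X) where
  default := FintypeCat.homMk PEmpty.elim
  uniq _ := FintypeCat.hom_ext _ _ (fun e => (e : PEmpty).elim)

def isTerminalX1 : IsTerminal X1 :=
  IsTerminal.ofUniqueHom (fun _ => FintypeCat.homMk fun _ => PUnit.unit)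
    (fun _ _ => FintypeCat.hom_ext _ _ fun _ => rfl)

def monomial (k : FintypeCat.{0}) : FintypeCat.{0} ⥤ FintypeCat.{0} ⥤ FintypeCat.{0} where
  obj n := polySum (fun _ : n => k)
  map f := { app := fun _ => FintypeCat.homMk fun x => ⟨f x.1, x.2⟩ }

def monomialAdjEvaluation (k : FintypeCat.{0}) : monomial k ⊣ (evaluation _ _).obj k :=
  Adjunction.mkOfHomEquiv
  { homEquiv := fun n P =>
      { toFun := fun η => FintypeCat.homMk fun x => η.app k ⟨x, 𝟙 k⟩
        invFun := fun f =>
          { app := fun X => FintypeCat.homMk fun x => P.map x.2 (f x.1)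
            naturality := fun X Y g => by
              ext x
              exact ConcreteCategory.congr_hom (P.map_comp x.2 g) (f x.1) }
        left_inv := fun η => by
          ext X ⟨i, x⟩
          have h : η.app X ⟨i, 𝟙 k ≫ x⟩ = P.map x (η.app k ⟨i, 𝟙 k⟩) :=
            ConcreteCategory.congr_hom (η.naturality x) ⟨i, 𝟙 k⟩
          change P.map x (η.app k ⟨i, 𝟙 k⟩) = η.app X ⟨i, x⟩
          rw [← h, Category.id_comp]
        right_inv := fun f => by
          ext x
          exact ConcreteCategory.congr_hom (P.map_id k) (f x) }
    homEquiv_naturality_left_symm := fun _ _ => rfl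
    homEquiv_naturality_right := fun _ _ => rfl }

def monomialInitialIsoConst : monomial X0 ≅ Functor.const _ :=
  NatIso.ofComponents fun n => NatIso.ofComponents fun X =>
    FintypeCat.equivEquivIso ((Equiv.sigmaEquivProd n (X0 ⟶ X)).trans (Equiv.prodUnique _ _))

namespace PolyCat

lemma isPolynomial_monomial (k n : FintypeCat.{0}) : IsPolynomial ((monomial k).obj n) :=
  ⟨n, inferInstance, fun _ => k, ⟨Iso.refl _⟩⟩

def monomial (k : FintypeCat.{0}) : FintypeCat.{0} ⥤ PolyCat :=
  ObjectProperty.lift _ (_root_.monomial k) (isPolynomial_monomial k)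

def eval (k : FintypeCat.{0}) : PolyCat ⥤ FintypeCat.{0} :=
  ObjectProperty.ι _ ⋙ (evaluation _ _).obj k

def monomialAdjEval (k : FintypeCat.{0}) : monomial k ⊣ eval k :=
  (monomialAdjEvaluation k).restrictFullyFaithful (Functor.FullyFaithful.id _)
    (ObjectProperty.fullyFaithfulι _) (Iso.refl _) (Iso.refl _)

def evalOneAdjMonomialZero : eval X1 ⊣ monomial X0 :=
  (evaluationAdjConstOfIsTerminal isTerminalX1).restrictFullyFaithful
    (ObjectProperty.fullyFaithfulι _) (Functor.FullyFaithful.id _) (Iso.refl _)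
    (Functor.leftUnitor _ ≪≫ monomialInitialIsoConst.symm)

end PolyCat

theorem poly_adjoint_quadruple :
    ∃ (L : FintypeCat.{0} ⥤ PolyCat) (E1 : PolyCat ⥤ FintypeCat.{0})
      (Cst : FintypeCat.{0} ⥤ PolyCat) (E0 : PolyCat ⥤ FintypeCat.{0}),
      -- `L` sends a finite set `n` to `n·𝓎`, the `n`-fold coproduct of `Fin(1, –)`
      (∀ n : FintypeCat.{0}, Nonempty ((L.obj n).obj ≅ polySum (fun _ : n => X1))) ∧
      -- `E1` is evaluation at `1`
      (∀ P : PolyCat, Nonempty (E1.obj P ≅ P.obj.obj X1)) ∧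
      -- `Cst` sends a finite set `n` to the constant polynomial `n`,
      -- the `n`-fold coproduct of the terminal functor `Fin(0, –)`
      (∀ n : FintypeCat.{0}, Nonempty ((Cst.obj n).obj ≅ polySum (fun _ : n => X0))) ∧
      -- `E0` is evaluation at `0`
      (∀ P : PolyCat, Nonempty (E0.obj P ≅ P.obj.obj X0)) ∧
      -- the adjoint quadruple `L ⊣ E1 ⊣ Cst ⊣ E0`
      Nonempty (L ⊣ E1) ∧ Nonempty (E1 ⊣ Cst) ∧ Nonempty (Cst ⊣ E0) :=
  ⟨PolyCat.monomial X1, PolyCat.eval X1, PolyCat.monomial X0, PolyCat.eval X0,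
    fun _ => ⟨Iso.refl _⟩, fun _ => ⟨Iso.refl _⟩, fun _ => ⟨Iso.refl _⟩, fun _ => ⟨Iso.refl _⟩,
    ⟨PolyCat.monomialAdjEval X1⟩, ⟨PolyCat.evalOneAdjMonomialZero⟩,
    ⟨PolyCat.monomialAdjEval X0⟩⟩
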